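/- arXiv:1808.03213 — 6 statements merged into one kernel-verified Lean document; each statement's English description precedes it below -/
import Mathlib

section
/- Let r be an integer and m, d positive integers with gcd(m,d) = 1. Let λ be the unique integer in {0,1,…,d-1} with r + λm ≡ 0 (mod d). Then (q^r; q^m)_d / (1 - q^d) ≡ r + λm modulo Φ_d(q). -/
/-
Write `r + λm = dk`. If `ζ` is a primitive `d`-th root of unity, every factor of
`(q^r; q^m)_d / (1 - q^d)` is regular at `q = ζ`: the factor with `j = λ` is
`(1 - q^(dk)) / (1 - q^d)`, a geometric sum with value `k`,
and since `m` is invertible mod `d` the remaining exponents `r + jm` run over the nonzero residues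
mod `d`, so the other factors multiply to `∏_{0<t<d} (1 - ζ^t) = d`. Hence the quotient has value
`dk = r + λm` at `ζ`, and a rational function regular at `ζ` is congruent modulo the minimal
polynomial `Φ_d` of `ζ` to anything with the same value there.
-/

open Polynomial Finset

lemma IsPrimitiveRoot.prod_erase_one_sub_pow_mul_eq_order {R : Type*} [CommRing R] [IsDomain R]
    {n i : ℕ} {μ α : R} (hμ : IsPrimitiveRoot μ n) (hi : i < n) (hα : μ ^ i * α = 1) :
    ∏ j ∈ (range n).erase i, (1 - μ ^ j * α) = n := by
  have hαn : α ^ n = 1 := by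
    calc α ^ n = (μ ^ n) ^ i * α ^ n := by rw [hμ.pow_eq_one, one_pow, one_mul]
      _ = 1 := by rw [← pow_mul, mul_comm n i, pow_mul, ← mul_pow, hα, one_pow]
  -- `X^n - 1 = ∏ j < n, (X - μ^j α) = (X - 1) * ∑ j < n, X^j`
  have hfactor := X_pow_sub_C_eq_prod hμ (i.zero_le.trans_lt hi) hαn
  rw [C_1, ← mul_geom_sum, ← mul_prod_erase _ _ (mem_range.2 hi), hα, C_1] at hfactor
  have := congrArg (eval 1) (mul_left_cancel₀ (X_sub_C_ne_zero 1) hfactor)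
  simpa [eval_prod, eval_geom_sum] using this.symm

lemma IsPrimitiveRoot.prod_erase_one_sub_zpow_add_mul_eq {K : Type*} [Field K] {ζ : K}
    {r : ℤ} {m d lam : ℕ} (hζ : IsPrimitiveRoot ζ d) (hcop : m.Coprime d) (hlam : lam < d)
    (hdvd : (d : ℤ) ∣ r + lam * m) :
    ∏ j ∈ (range d).erase lam, (1 - ζ ^ (r + (j : ℤ) * m)) = d := by
  have hpow (j : ℕ) : ζ ^ (r + (j : ℤ) * m) = (ζ ^ m) ^ j * ζ ^ r := by
    rw [← zpow_natCast, ← zpow_natCast, ← zpow_mul, ← zpow_add₀ (hζ.ne_zero (by omega))]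
    ring_nf
  simp_rw [hpow]
  refine (hζ.pow_of_coprime m hcop).prod_erase_one_sub_pow_mul_eq_order hlam ?_
  rwa [← hpow, hζ.zpow_eq_one_iff_dvd]

namespace RatFunc

variable {K L : Type*} [Field K] [Field L] [Algebra K L]

/-- `f` lies in the localization of `K[X]` at the prime `ker (aeval ζ)` and evaluates to `v`. -/
def HasValueAt (f : RatFunc K) (ζ v : L) : Prop :=
  ∃ N D : K[X], aeval ζ D ≠ 0 ∧
    f * algebraMap K[X] (RatFunc K) D = algebraMap K[X] (RatFunc K) N ∧
    aeval ζ N = v * aeval ζ D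

variable {ζ v w : L} {f g : RatFunc K}

theorem hasValueAt_algebraMap (p : K[X]) :
    HasValueAt (algebraMap K[X] (RatFunc K) p) ζ (aeval ζ p) :=
  ⟨p, 1, by simp, by simp, by simp⟩

theorem hasValueAt_intCast (c : ℤ) : HasValueAt (c : RatFunc K) ζ c := by
  simpa using hasValueAt_algebraMap (K := K) (ζ := ζ) (c : K[X])

theorem hasValueAt_one : HasValueAt (1 : RatFunc K) ζ 1 := by
  simpa using hasValueAt_intCast (K := K) (ζ := ζ) 1

theorem hasValueAt_X : HasValueAt (X : RatFunc K) ζ ζ := by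
  simpa using hasValueAt_algebraMap (K := K) (ζ := ζ) Polynomial.X

theorem HasValueAt.mul (hf : HasValueAt f ζ v) (hg : HasValueAt g ζ w) :
    HasValueAt (f * g) ζ (v * w) := by
  obtain ⟨N₁, D₁, hD₁, hf, hN₁⟩ := hf
  obtain ⟨N₂, D₂, hD₂, hg, hN₂⟩ := hg
  refine ⟨N₁ * N₂, D₁ * D₂, by simpa using ⟨hD₁, hD₂⟩, ?_, ?_⟩
  · rw [map_mul, map_mul, ← hf, ← hg]; ring
  · rw [map_mul, map_mul, hN₁, hN₂]; ring

theorem HasValueAt.sub (hf : HasValueAt f ζ v) (hg : HasValueAt g ζ w) :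
    HasValueAt (f - g) ζ (v - w) := by
  obtain ⟨N₁, D₁, hD₁, hf, hN₁⟩ := hf
  obtain ⟨N₂, D₂, hD₂, hg, hN₂⟩ := hg
  refine ⟨N₁ * D₂ - N₂ * D₁, D₁ * D₂, by simpa using ⟨hD₁, hD₂⟩, ?_, ?_⟩
  · rw [map_sub, map_mul, map_mul, map_mul, ← hf, ← hg]; ring
  · rw [map_sub, map_mul, map_mul, map_mul, hN₁, hN₂]; ring

theorem HasValueAt.inv (hf : HasValueAt f ζ v) (hv : v ≠ 0) : HasValueAt f⁻¹ ζ v⁻¹ := by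
  obtain ⟨N, D, hD, hf, hN⟩ := hf
  have hN0 : aeval ζ N ≠ 0 := by rw [hN]; exact mul_ne_zero hv hD
  have hf0 : f ≠ 0 :=
    left_ne_zero_of_mul (hf ▸ algebraMap_ne_zero (by rintro rfl; simp at hN0))
  refine ⟨D, N, hN0, ?_, ?_⟩
  · rw [← hf, inv_mul_cancel_left₀ hf0]
  · rw [hN, inv_mul_cancel_left₀ hv]

theorem HasValueAt.pow (hf : HasValueAt f ζ v) (n : ℕ) : HasValueAt (f ^ n) ζ (v ^ n) := by
  induction n with
  | zero => simpa using hasValueAt_one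
  | succ n ih => simpa [pow_succ] using ih.mul hf

theorem HasValueAt.zpow (hf : HasValueAt f ζ v) (hv : v ≠ 0) (n : ℤ) :
    HasValueAt (f ^ n) ζ (v ^ n) := by
  obtain ⟨n, rfl | rfl⟩ := n.eq_nat_or_neg
  · simpa using hf.pow n
  · simpa using (hf.pow n).inv (pow_ne_zero n hv)

theorem hasValueAt_prod {ι : Type*} (s : Finset ι) {f : ι → RatFunc K} {v : ι → L}
    (h : ∀ i ∈ s, HasValueAt (f i) ζ (v i)) :
    HasValueAt (∏ i ∈ s, f i) ζ (∏ i ∈ s, v i) := by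
  classical
  induction s using Finset.induction_on with
  | empty => exact hasValueAt_one
  | insert a s ha ih =>
    rw [prod_insert ha, prod_insert ha]
    exact (h a (mem_insert_self a s)).mul (ih fun i hi => h i (mem_insert_of_mem hi))

theorem hasValueAt_one_sub_X_zpow_mul_div {d : ℕ} (hd : 0 < d) (hζ : ζ ^ d = 1) (k : ℤ) :
    HasValueAt ((1 - X ^ ((d : ℤ) * k)) / (1 - X ^ (d : ℤ)) : RatFunc K) ζ k := by
  have hden : (1 - X ^ (d : ℤ) : RatFunc K) ≠ 0 := by
    have : (1 - X ^ (d : ℤ) : RatFunc K) = algebraMap K[X] _ (1 - Polynomial.X ^ d) := by simp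
    rw [this]
    refine algebraMap_ne_zero fun h => ?_
    simpa [hd.ne'] using congrArg (Polynomial.eval 0) h
  have hnat (n : ℕ) :
      HasValueAt ((1 - X ^ ((d : ℤ) * n)) / (1 - X ^ (d : ℤ)) : RatFunc K) ζ (n : ℤ) := by
    have hgeom : ((1 - X ^ ((d : ℤ) * n)) / (1 - X ^ (d : ℤ)) : RatFunc K) =
        algebraMap K[X] (RatFunc K) (∑ i ∈ range n, (Polynomial.X ^ d) ^ i) := by
      rw [div_eq_iff hden, zpow_mul, zpow_natCast, zpow_natCast, ← geom_sum_mul_neg]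
      simp
    rw [hgeom]
    convert hasValueAt_algebraMap _
    simp [hζ]
  have hζ0 : ζ ≠ 0 := by rintro rfl; simp [hd.ne'] at hζ
  obtain ⟨n, rfl | rfl⟩ := k.eq_nat_or_neg
  · exact hnat n
  · have h := ((hasValueAt_X.zpow hζ0 (-(d * n))).mul (hnat n)).mul (hasValueAt_intCast (-1))
    convert h using 1
    · have hnum : (1 - X ^ ((d : ℤ) * -n) : RatFunc K) =
          -(X ^ (-(d * n : ℤ)) * (1 - X ^ (d * n : ℤ))) := by
        rw [mul_sub, mul_one, ← zpow_add₀ (X_ne_zero (K := K)), neg_add_cancel, zpow_zero,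
          mul_neg]
        ring
      rw [hnum]; push_cast; ring
    · rw [zpow_neg, zpow_mul, zpow_natCast, zpow_natCast, hζ]; push_cast; ring

theorem HasValueAt.exists_sub_mul_eq_minpoly_mul (hf : HasValueAt f ζ v)
    (hg : HasValueAt g ζ v) :
    ∃ a b : K[X], ¬ minpoly K ζ ∣ b ∧
      (f - g) * algebraMap K[X] (RatFunc K) b =
        algebraMap K[X] (RatFunc K) (minpoly K ζ * a) := by
  obtain ⟨N, D, hD, hfg, hN⟩ := hf.sub hg
  rw [sub_self, zero_mul] at hN
  obtain ⟨a, rfl⟩ := minpoly.dvd K ζ hN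
  exact ⟨a, D, fun hdvd => hD (aeval_eq_zero_of_dvd_aeval_eq_zero hdvd (minpoly.aeval K ζ)),
    hfg⟩

theorem hasValueAt_prod_one_sub_X_zpow_div {r : ℤ} {m d lam : ℕ} (hζ : IsPrimitiveRoot ζ d)
    (hcop : m.Coprime d) (hlam : lam < d) (hdvd : (d : ℤ) ∣ r + lam * m) :
    HasValueAt
      ((∏ j ∈ range d, (1 - X ^ (r + (j : ℤ) * m))) / (1 - X ^ (d : ℤ)) : RatFunc K) ζ
      ((r + lam * m : ℤ) : L) := by
  obtain ⟨k, hk⟩ := hdvd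
  have hfactor (j : ℕ) : HasValueAt (1 - X ^ (r + (j : ℤ) * m) : RatFunc K) ζ
      (1 - ζ ^ (r + (j : ℤ) * m)) :=
    hasValueAt_one.sub (hasValueAt_X.zpow (hζ.ne_zero (by omega)) _)
  have hvalue := (hasValueAt_one_sub_X_zpow_mul_div (K := K) (by omega) hζ.pow_eq_one k).mul
    (hasValueAt_prod ((range d).erase lam) fun j _ => hfactor j)
  rw [hζ.prod_erase_one_sub_zpow_add_mul_eq hcop hlam ⟨k, hk⟩] at hvalue
  convert hvalue using 1
  · rw [← mul_prod_erase _ _ (mem_range.2 hlam), mul_div_right_comm, hk]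
  · rw [hk]; push_cast; ring

end RatFunc

theorem qPoch_div_congr_cyclotomic_general (r : ℤ) (m d : ℕ) (hd : 0 < d)
    (hcop : Nat.Coprime m d) (lam : ℕ) (hlam : lam < d)
    (hdvd : (d : ℤ) ∣ r + lam * m) :
    ∃ a b : Polynomial ℚ, ¬ Polynomial.cyclotomic d ℚ ∣ b ∧
      ((∏ j ∈ Finset.range d, (1 - (RatFunc.X : RatFunc ℚ) ^ (r + (j : ℤ) * m)))
          / (1 - (RatFunc.X : RatFunc ℚ) ^ (d : ℤ))
        - ((r + lam * m : ℤ) : RatFunc ℚ))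
          * algebraMap (Polynomial ℚ) (RatFunc ℚ) b
        = algebraMap (Polynomial ℚ) (RatFunc ℚ) (Polynomial.cyclotomic d ℚ * a) := by
  obtain ⟨ζ, hζ⟩ : ∃ ζ : ℂ, IsPrimitiveRoot ζ d :=
    ⟨_, Complex.isPrimitiveRoot_exp d hd.ne'⟩
  rw [cyclotomic_eq_minpoly_rat hζ hd]
  exact (RatFunc.hasValueAt_prod_one_sub_X_zpow_div hζ hcop hlam hdvd)
    |>.exists_sub_mul_eq_minpoly_mul (RatFunc.hasValueAt_intCast _)

theorem qPoch_div_congr_cyclotomic (r : ℤ) (m d : ℕ) (hm : 0 < m) (hd : 0 < d)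
    (hcop : Nat.Coprime m d) (lam : ℕ) (hlam : lam < d)
    (hdvd : (d : ℤ) ∣ r + lam * m) :
    ∃ a b : Polynomial ℚ, ¬ Polynomial.cyclotomic d ℚ ∣ b ∧
      ((∏ j ∈ Finset.range d, (1 - (RatFunc.X : RatFunc ℚ) ^ (r + (j : ℤ) * m)))
          / (1 - (RatFunc.X : RatFunc ℚ) ^ (d : ℤ))
        - ((r + lam * m : ℤ) : RatFunc ℚ))
          * algebraMap (Polynomial ℚ) (RatFunc ℚ) b
        = algebraMap (Polynomial ℚ) (RatFunc ℚ) (Polynomial.cyclotomic d ℚ * a) :=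
  qPoch_div_congr_cyclotomic_general r m d hd hcop lam hlam hdvd
end

section
/- For all integers n ≥ 1 and 0 ≤ k ≤ n-1, the 2-adic valuation of n·binom(2n,n) is at most (n-k) plus the 2-adic valuation of binom(2k,k). -/
open Nat

lemma step_val (m : ℕ) :
    padicValNat 2 ((m + 1) * Nat.centralBinom (m + 1)) =
      1 + padicValNat 2 (Nat.centralBinom m) := by
  have h := Nat.succ_mul_centralBinom_succ m
  rw [h]
  have h2 : (2 : ℕ) * (2 * m + 1) * Nat.centralBinom m
      = 2 * ((2 * m + 1) * Nat.centralBinom m) := by ring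
  rw [h2, padicValNat.mul (by omega) (Nat.mul_ne_zero (by omega) (Nat.centralBinom_pos m).ne'),
    padicValNat.mul (by omega) (Nat.centralBinom_pos m).ne',
    padicValNat.self (by norm_num)]
  have hodd : padicValNat 2 (2 * m + 1) = 0 := by
    apply padicValNat.eq_zero_of_not_dvd
    omega
  omega

lemma chain_val (d k : ℕ) :
    padicValNat 2 (Nat.centralBinom (k + d)) ≤ d + padicValNat 2 (Nat.centralBinom k) := by
  induction d with
  | zero => simp
  | succ d ih =>
    have h1 : padicValNat 2 (Nat.centralBinom (k + d + 1)) ≤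
        padicValNat 2 ((k + d + 1) * Nat.centralBinom (k + d + 1)) := by
      rw [padicValNat.mul (by omega) (Nat.centralBinom_pos _).ne']
      omega
    have h2 := step_val (k + d)
    have : k + (d + 1) = k + d + 1 := by omega
    rw [this]
    omega

theorem ord_two_n_centralBinom_le (n k : ℕ) (hn : 1 ≤ n) (hk : k ≤ n - 1) :
    padicValNat 2 (n * Nat.choose (2 * n) n) ≤
      (n - k) + padicValNat 2 (Nat.choose (2 * k) k) := by
  obtain ⟨m, rfl⟩ : ∃ m, n = m + 1 := ⟨n - 1, by omega⟩
  have hcb : ∀ j : ℕ, Nat.choose (2 * j) j = Nat.centralBinom j := fun j => rfl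
  rw [hcb, hcb, step_val]
  have hk' : k ≤ m := by omega
  have := chain_val (m - k) k
  rw [show k + (m - k) = m from by omega] at this
  omega
end

section
/- Let ρ ≥ 2 and n ≥ 2 be integers. Then for every 0 ≤ k ≤ n-1, the 2-adic valuation of binom(2k,k)^ρ · 4^{ρ(n-1-k)} is at least (ρ-2) plus the 2-adic valuation of n·binom(2n,n). -/
/-!
Write `v m` for the 2-adic valuation of `binom(2m, m)`. The identity
`(m + 1) binom(2m+2, m+1) = 2 (2m + 1) binom(2m, m)` gives `ν₂((m+1) binom(2m+2, m+1)) = v m + 1`,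
so the left side is `ρ - 1 + v (n - 1)` and `v` grows by at most one per step:
`v (n - 1) ≤ v k + d` with `d = n - 1 - k`. The right side is `ρ v k + 2ρd`, which wins easily
when `d ≥ 1`; when `d = 0` one uses `v k ≥ 1` for `k ≥ 1`.
-/

open Nat

theorem padicValNat_two_succ_mul_centralBinom_succ (m : ℕ) :
    padicValNat 2 ((m + 1) * centralBinom (m + 1)) = padicValNat 2 (centralBinom m) + 1 := by
  have hodd : padicValNat 2 (2 * m + 1) = 0 := padicValNat.eq_zero_of_not_dvd (by omega)
  rw [succ_mul_centralBinom_succ, padicValNat.mul (by positivity) (centralBinom_ne_zero m),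
    padicValNat.mul two_ne_zero (by omega), padicValNat.self one_lt_two, hodd]
  ring

theorem padicValNat_two_centralBinom_succ_le (m : ℕ) :
    padicValNat 2 (centralBinom (m + 1)) ≤ padicValNat 2 (centralBinom m) + 1 := by
  have h := padicValNat_two_succ_mul_centralBinom_succ m
  rw [padicValNat.mul m.succ_ne_zero (centralBinom_ne_zero _)] at h
  omega

theorem padicValNat_two_centralBinom_add_le (k d : ℕ) :
    padicValNat 2 (centralBinom (k + d)) ≤ padicValNat 2 (centralBinom k) + d := by
  induction d with
  | zero => rfl
  | succ d ih =>
    rw [← Nat.add_assoc]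
    have := padicValNat_two_centralBinom_succ_le (k + d)
    omega

theorem one_le_padicValNat_two_centralBinom {m : ℕ} (hm : 0 < m) :
    1 ≤ padicValNat 2 (centralBinom m) :=
  one_le_padicValNat_of_dvd (centralBinom_ne_zero m) (two_dvd_centralBinom_of_one_le hm)

theorem padicValNat_two_pow_mul_four_pow {a : ℕ} (ha : a ≠ 0) (ρ e : ℕ) :
    padicValNat 2 (a ^ ρ * 4 ^ e) = ρ * padicValNat 2 a + 2 * e := by
  rw [show (4 : ℕ) ^ e = 2 ^ (2 * e) by rw [pow_mul]; norm_num,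
    padicValNat.mul (pow_ne_zero ρ ha) (by positivity), padicValNat.pow,
    padicValNat.prime_pow]

theorem ord_two_term_ge (ρ n k : ℕ) (hρ : 2 ≤ ρ) (hn : 2 ≤ n) (hk : k ≤ n - 1) :
    (ρ - 2) + padicValNat 2 (n * Nat.choose (2 * n) n) ≤
      padicValNat 2 (Nat.choose (2 * k) k ^ ρ * 4 ^ (ρ * (n - 1 - k))) := by
  obtain ⟨c, rfl⟩ : ∃ c, ρ = c + 2 := ⟨ρ - 2, by omega⟩
  obtain ⟨d, rfl⟩ : ∃ d, n = k + d + 1 := ⟨n - 1 - k, by omega⟩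
  rw [Nat.add_sub_cancel, show k + d + 1 - 1 - k = d by omega, ← centralBinom_eq_two_mul_choose,
    ← centralBinom_eq_two_mul_choose, padicValNat_two_succ_mul_centralBinom_succ,
    padicValNat_two_pow_mul_four_pow (centralBinom_ne_zero k)]
  have hgrowth := padicValNat_two_centralBinom_add_le k d
  have hvk : d = 0 → 1 ≤ padicValNat 2 (centralBinom k) := fun hd =>
    one_le_padicValNat_two_centralBinom (by omega)
  generalize padicValNat 2 (centralBinom k) = v at *
  rcases Nat.eq_zero_or_pos d with rfl | hd
  · nlinarith [hvk rfl]
  · nlinarith [Nat.le_mul_of_pos_right c hd]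
end

section
/- Let r be an integer, m a positive integer coprime to r, and n a positive integer. With N = numerator of n·|binom(-r/m, n)| in lowest terms, N is coprime to m. -/
/-!
Writing `x = a / m`, the product `x(x-1)⋯(x-n+1)` equals `P / mⁿ` with
`P = ∏_{i<n} (a - i m)`, and every factor of `P` is `≡ a (mod m)`, so `P` is coprime to `m`.
Since `n · binom(x, n) = P / (mⁿ (n-1)!)`, its numerator in lowest terms divides `P`.
-/

open Finset

/-- The generalized binomial coefficient `x(x-1)⋯(x-k+1)/k!` for a rational `x`. -/
def ratChoose (x : ℚ) (k : ℕ) : ℚ :=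
  (∏ i ∈ Finset.range k, (x - i)) / (Nat.factorial k : ℚ)

open scoped Nat

lemma natCast_mul_ratChoose (x : ℚ) {n : ℕ} (hn : 0 < n) :
    n * ratChoose x n = (∏ i ∈ range n, (x - i)) / (n - 1)! := by
  have hfac : (n ! : ℚ) = n * (n - 1)! := by
    rw [← Nat.cast_mul, Nat.mul_factorial_pred hn.ne']
  have hn0 : (n : ℚ) ≠ 0 := Nat.cast_ne_zero.mpr hn.ne'
  rw [ratChoose, hfac]
  field_simp

lemma prod_intCast_div_sub_natCast (a : ℤ) {m : ℕ} (hm : m ≠ 0) (s : Finset ℕ) :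
    ∏ i ∈ s, ((a : ℚ) / m - i) = ((∏ i ∈ s, (a - i * m) : ℤ) : ℚ) / m ^ #s := by
  have hm0 : (m : ℚ) ≠ 0 := Nat.cast_ne_zero.mpr hm
  have hfactor : ∀ i ∈ s, (a : ℚ) / m - i = ((a - i * m : ℤ) : ℚ) / m := by
    intro i _
    push_cast
    field_simp
  rw [prod_congr rfl hfactor, prod_div_distrib, prod_const]
  push_cast
  rfl

lemma isCoprime_prod_sub_mul {a m : ℤ} (h : IsCoprime a m) (s : Finset ℕ) :
    IsCoprime (∏ i ∈ s, (a - i * m)) m :=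
  IsCoprime.prod_left fun _ _ => IsCoprime.sub_mul_right_left_iff.mpr h

lemma Rat.isCoprime_num_intCast_div {a b k : ℤ} (hb : b ≠ 0) (h : IsCoprime a k) :
    IsCoprime ((a : ℚ) / b).num k := by
  rw [← Rat.divInt_eq_div]
  exact h.of_isCoprime_of_dvd_left (Rat.num_dvd a hb)

theorem numerator_coprime (r : ℤ) (m : ℕ) (hm : 0 < m) (hcop : Int.gcd r m = 1)
    (n : ℕ) (hn : 0 < n) :
    Int.gcd (((n : ℚ) * |ratChoose (-((r : ℚ) / (m : ℚ))) n|).num) m = 1 := by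
  have hmul : (n : ℚ) * ratChoose (-((r : ℚ) / m)) n
      = ((∏ i ∈ range n, (-r - i * m) : ℤ) : ℚ) / ((m ^ n * (n - 1)! : ℕ) : ℤ) := by
    rw [natCast_mul_ratChoose _ hn, ← neg_div, ← Int.cast_neg,
      prod_intCast_div_sub_natCast _ hm.ne', card_range, div_div]
    push_cast
    rfl
  have hnum : IsCoprime ((n : ℚ) * ratChoose (-((r : ℚ) / m)) n).num m := by
    rw [hmul]
    exact Rat.isCoprime_num_intCast_div (by positivity)
      (isCoprime_prod_sub_mul (Int.isCoprime_iff_gcd_eq_one.mpr hcop).neg_left _)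
  rw [← abs_of_nonneg (Nat.cast_nonneg n : (0 : ℚ) ≤ n), ← abs_mul, Rat.num_abs_eq_abs_num,
    ← Int.isCoprime_iff_gcd_eq_one]
  exact hnum.abs_left
end

section
/- For every d ≥ 2 coprime to m and every r with gcd(r,m)=1, letting h = λ_{r,m}(d) ∈ {0,…,d-1} be the residue with r + hm ≡ 0 (mod d), for all 0 ≤ k ≤ d-1 one has (q^r;q^m)_k / (q^m;q^m)_k ≡ (-1)^k q^{m·binom(k,2) - mhk} · qbinom(h, k; q^m) modulo Φ_d(q), as Φ_d(q)-integral rational functions. -/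
/-!
Since `r + j m ≡ m (j - h) (mod d)`, each factor `1 - q^(r + j m)` of the left numerator agrees
modulo `Φ_d` with `1 - q^(m (j - h))`, once the negative powers of `q` are cleared. Reading the
numerator of the `q`-binomial backwards shows that the sign and the power of `q` turn it into
`∏_{j<k} (1 - q^(m (j - h)))`, so both sides have the denominator `(q^m; q^m)_k`, which is prime
to `Φ_d` because `d ∤ m (j + 1)` for `j + 1 < d` when `gcd(d, m) = 1`.
-/

open Polynomial Finset

theorem Polynomial.cyclotomic_dvd_X_pow_sub_X_pow {R : Type*} [CommRing R] {d a b : ℕ}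
    (hab : (d : ℤ) ∣ (a : ℤ) - b) : cyclotomic d R ∣ (X ^ a - X ^ b : R[X]) := by
  wlog hba : b ≤ a generalizing a b
  · rw [← dvd_neg, neg_sub]
    exact this (by rwa [← dvd_neg, neg_sub]) (by omega)
  obtain ⟨t, ht⟩ : d ∣ a - b := by rwa [← Int.natCast_dvd_natCast, Nat.cast_sub hba]
  have hsplit : (X ^ a - X ^ b : R[X]) = X ^ b * (X ^ (d * t) - 1) := by
    rw [← ht, mul_sub, mul_one, ← pow_add, Nat.add_sub_cancel' hba]
  rw [hsplit]
  exact dvd_mul_of_dvd_right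
    ((cyclotomic.dvd_X_pow_sub_one d R).trans (pow_one_sub_dvd_pow_mul_sub_one X d t)) _

theorem Polynomial.cyclotomic_rat_dvd_iff_aeval_eq_zero {d : ℕ} (hd : 0 < d) {ζ : ℂ}
    (hζ : IsPrimitiveRoot ζ d) {p : ℚ[X]} : cyclotomic d ℚ ∣ p ↔ aeval ζ p = 0 := by
  rw [cyclotomic_eq_minpoly_rat hζ hd]
  exact minpoly.dvd_iff

theorem Polynomial.not_cyclotomic_dvd_X_pow_mul_prod_one_sub_X_pow {d m k : ℕ} (hd : 0 < d)
    (hdm : d.Coprime m) (hk : k < d) (N : ℕ) :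
    ¬ cyclotomic d ℚ ∣ X ^ N * ∏ j ∈ range k, (1 - X ^ (m * (j + 1))) := by
  have hζ := Complex.isPrimitiveRoot_exp d hd.ne'
  rw [cyclotomic_rat_dvd_iff_aeval_eq_zero hd hζ]
  simp only [map_mul, map_pow, map_prod, map_sub, map_one, aeval_X]
  refine mul_ne_zero (pow_ne_zero _ (hζ.ne_zero hd.ne')) (prod_ne_zero_iff.mpr fun j hj => ?_)
  rw [sub_ne_zero, ne_comm, Ne, hζ.pow_eq_one_iff_dvd]
  intro hdvd
  have := Nat.le_of_dvd j.succ_pos (hdm.dvd_of_dvd_mul_left hdvd)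
  have := mem_range.mp hj
  omega

namespace RatFunc

variable {K : Type*} [Field K]

theorem algebraMap_X_pow_sub_X_pow_toNat {N : ℕ} {e : ℤ} (he : 0 ≤ (N : ℤ) + e) :
    algebraMap K[X] (RatFunc K) (Polynomial.X ^ N - Polynomial.X ^ ((N : ℤ) + e).toNat) =
      X ^ N * (1 - X ^ e) := by
  rw [map_sub, map_pow, map_pow, algebraMap_X, ← zpow_natCast X (_ : ℤ).toNat,
    Int.toNat_of_nonneg he, zpow_add₀ X_ne_zero, zpow_natCast]
  ring

/-- Congruence modulo `p` of Laurent polynomials in `X`, read off after clearing denominators by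
a common power of `X`. -/
def ShiftModEq (p : K[X]) (x y : RatFunc K) : Prop :=
  ∃ (N : ℕ) (f g : K[X]), algebraMap K[X] (RatFunc K) f = X ^ N * x ∧
    algebraMap K[X] (RatFunc K) g = X ^ N * y ∧ p ∣ f - g

namespace ShiftModEq

variable {p : K[X]}

theorem one : ShiftModEq p 1 1 :=
  ⟨0, 1, 1, by simp, by simp, by simp⟩

theorem mul {x y x' y' : RatFunc K} (h : ShiftModEq p x y) (h' : ShiftModEq p x' y') :
    ShiftModEq p (x * x') (y * y') := by
  obtain ⟨N, f, g, hf, hg, hfg⟩ := h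
  obtain ⟨N', f', g', hf', hg', hfg'⟩ := h'
  refine ⟨N + N', f * f', g * g', ?_, ?_, ?_⟩
  · rw [map_mul, hf, hf']; ring
  · rw [map_mul, hg, hg']; ring
  · have hsplit : f * f' - g * g' = f * (f' - g') + (f - g) * g' := by ring
    rw [hsplit]
    exact dvd_add (dvd_mul_of_dvd_right hfg' _) (dvd_mul_of_dvd_left hfg _)

theorem prod {ι : Type*} {s : Finset ι} {x y : ι → RatFunc K}
    (h : ∀ i ∈ s, ShiftModEq p (x i) (y i)) : ShiftModEq p (∏ i ∈ s, x i) (∏ i ∈ s, y i) := by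
  induction s using Finset.cons_induction with
  | empty => exact one
  | cons i s hi ih =>
    rw [prod_cons, prod_cons]
    exact (h i (mem_cons_self i s)).mul (ih fun j hj => h j (mem_cons_of_mem hj))

end ShiftModEq

theorem shiftModEq_cyclotomic_one_sub_X_zpow {d : ℕ} {e e' : ℤ} (he : (d : ℤ) ∣ e - e') :
    ShiftModEq (cyclotomic d K) (1 - X ^ e) (1 - X ^ e') := by
  set N := e.natAbs + e'.natAbs
  have hN : 0 ≤ (N : ℤ) + e := by omega
  have hN' : 0 ≤ (N : ℤ) + e' := by omega
  refine ⟨N, _, _, algebraMap_X_pow_sub_X_pow_toNat hN, algebraMap_X_pow_sub_X_pow_toNat hN', ?_⟩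
  rw [sub_sub_sub_cancel_left]
  apply cyclotomic_dvd_X_pow_sub_X_pow
  rw [Int.toNat_of_nonneg hN, Int.toNat_of_nonneg hN', add_sub_add_left_eq_sub]
  exact dvd_sub_comm.mp he

end RatFunc

theorem prod_range_one_sub_zpow_sub {K : Type*} [Field K] {x : K} (hx : x ≠ 0) (h : ℤ) (k : ℕ) :
    ∏ j ∈ range k, (1 - x ^ ((j : ℤ) - h)) =
      (-1) ^ k * x ^ ((k.choose 2 : ℤ) - h * k) * ∏ j ∈ range k, (1 - x ^ (h - j)) := by
  induction k with
  | zero => simp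
  | succ k ih =>
    have hflip : 1 - x ^ ((k : ℤ) - h) = -x ^ ((k : ℤ) - h) * (1 - x ^ (h - k)) := by
      have : x ^ ((k : ℤ) - h) * x ^ (h - k) = 1 := by rw [← zpow_add₀ hx]; simp
      linear_combination -this
    have hexp : (((k + 1).choose 2 : ℕ) : ℤ) - h * ((k + 1 : ℕ) : ℤ) =
        ((k.choose 2 : ℤ) - h * k) + (k - h) := by
      rw [Nat.choose_succ_succ', Nat.choose_one_right]; push_cast; ring
    rw [prod_range_succ, ih, hflip, prod_range_succ, hexp, zpow_add₀ hx]
    ring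

theorem prod_range_one_sub_zpow_sub_reflect {K : Type*} [Field K] {x : K} (hx : x ≠ 0) (h : ℤ)
    (k : ℕ) :
    ∏ j ∈ range k, (1 - x ^ ((j : ℤ) - h)) =
      (-1) ^ k * x ^ ((k.choose 2 : ℤ) - h * k) * ∏ i ∈ range k, (1 - x ^ (h - k + 1 + i)) := by
  rw [prod_range_one_sub_zpow_sub hx, ← prod_range_reflect]
  refine congrArg _ (prod_congr rfl fun i hi => ?_)
  have hik := mem_range.mp hi
  rw [Nat.cast_sub (by omega), Nat.cast_sub (by omega)]
  ring_nf

theorem qPoch_ratio_congr_qbinom_general (d m : ℕ) (r : ℤ) (hd : 2 ≤ d)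
    (hdm : Nat.Coprime d m) (h : ℕ)
    (hdvd : (d : ℤ) ∣ r + (h : ℤ) * m) (k : ℕ) (hk : k ≤ d - 1) :
    ∃ a b : Polynomial ℚ, ¬ Polynomial.cyclotomic d ℚ ∣ b ∧
      ((∏ j ∈ Finset.range k, (1 - (RatFunc.X : RatFunc ℚ) ^ (r + (j : ℤ) * m)))
          / (∏ j ∈ Finset.range k, (1 - (RatFunc.X : RatFunc ℚ) ^ ((m : ℤ) * (j + 1))))
        - (-1) ^ k
            * (RatFunc.X : RatFunc ℚ) ^ ((m : ℤ) * (Nat.choose k 2) - (m : ℤ) * h * k)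
            * ((∏ i ∈ Finset.range k,
                  (1 - ((RatFunc.X : RatFunc ℚ) ^ (m : ℤ)) ^ ((h : ℤ) - k + 1 + i)))
                / (∏ i ∈ Finset.range k,
                  (1 - ((RatFunc.X : RatFunc ℚ) ^ (m : ℤ)) ^ ((i : ℤ) + 1)))))
          * algebraMap (Polynomial ℚ) (RatFunc ℚ) b
        = algebraMap (Polynomial ℚ) (RatFunc ℚ) (Polynomial.cyclotomic d ℚ * a) := by
  set q : RatFunc ℚ := RatFunc.X with hq
  set A := ∏ j ∈ range k, (1 - q ^ (r + (j : ℤ) * m))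
  set B := ∏ j ∈ range k, (1 - (q ^ (m : ℤ)) ^ ((j : ℤ) - h))
  set Dp : ℚ[X] := ∏ j ∈ range k, (1 - Polynomial.X ^ (m * (j + 1)))
  obtain ⟨N, P, Q, hP, hQ, ⟨a, ha⟩⟩ : RatFunc.ShiftModEq (cyclotomic d ℚ) A B :=
    RatFunc.ShiftModEq.prod fun j _ => by
      rw [← zpow_mul]
      exact RatFunc.shiftModEq_cyclotomic_one_sub_X_zpow (by convert hdvd using 1; ring)
  have hb := not_cyclotomic_dvd_X_pow_mul_prod_one_sub_X_pow (k := k) (by omega) hdm (by omega) N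
  have hDp : algebraMap ℚ[X] (RatFunc ℚ) Dp ≠ 0 :=
    RatFunc.algebraMap_ne_zero (right_ne_zero_of_mul fun h0 => hb (h0 ▸ dvd_zero _))
  refine ⟨a, Polynomial.X ^ N * Dp, hb, ?_⟩
  have hD : ∏ j ∈ range k, (1 - q ^ ((m : ℤ) * (j + 1))) = algebraMap ℚ[X] (RatFunc ℚ) Dp := by
    simp only [Dp, map_prod, map_sub, map_one, map_pow, RatFunc.algebraMap_X, ← zpow_natCast]
    push_cast
    rfl
  have hDq : ∏ i ∈ range k, (1 - (q ^ (m : ℤ)) ^ ((i : ℤ) + 1)) =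
      algebraMap ℚ[X] (RatFunc ℚ) Dp := by
    simp only [← zpow_mul, hD]
  have hB : (-1) ^ k * q ^ ((m : ℤ) * (Nat.choose k 2) - (m : ℤ) * h * k) *
      ∏ i ∈ range k, (1 - (q ^ (m : ℤ)) ^ ((h : ℤ) - k + 1 + i)) = B := by
    have hs : q ^ ((m : ℤ) * (Nat.choose k 2) - (m : ℤ) * h * k) =
        (q ^ (m : ℤ)) ^ ((Nat.choose k 2 : ℤ) - h * k) := by
      rw [← zpow_mul]; ring_nf
    rw [hs, ← prod_range_one_sub_zpow_sub_reflect (zpow_ne_zero _ RatFunc.X_ne_zero)]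
  rw [hD, hDq, ← mul_div_assoc, hB]
  calc (A / _ - B / _) * algebraMap ℚ[X] (RatFunc ℚ) (Polynomial.X ^ N * Dp)
      = q ^ N * A - q ^ N * B := by rw [map_mul, map_pow, RatFunc.algebraMap_X, ← hq]; field_simp
    _ = _ := by rw [← hP, ← hQ, ← map_sub, ha]

theorem qPoch_ratio_congr_qbinom (d m : ℕ) (r : ℤ) (hd : 2 ≤ d) (hm : 0 < m)
    (hdm : Nat.Coprime d m) (hrm : Int.gcd r m = 1) (h : ℕ) (hh : h < d)
    (hdvd : (d : ℤ) ∣ r + (h : ℤ) * m) (k : ℕ) (hk : k ≤ d - 1) :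
    ∃ a b : Polynomial ℚ, ¬ Polynomial.cyclotomic d ℚ ∣ b ∧
      ((∏ j ∈ Finset.range k, (1 - (RatFunc.X : RatFunc ℚ) ^ (r + (j : ℤ) * m)))
          / (∏ j ∈ Finset.range k, (1 - (RatFunc.X : RatFunc ℚ) ^ ((m : ℤ) * (j + 1))))
        - (-1) ^ k
            * (RatFunc.X : RatFunc ℚ) ^ ((m : ℤ) * (Nat.choose k 2) - (m : ℤ) * h * k)
            * ((∏ i ∈ Finset.range k,
                  (1 - ((RatFunc.X : RatFunc ℚ) ^ (m : ℤ)) ^ ((h : ℤ) - k + 1 + i)))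
                / (∏ i ∈ Finset.range k,
                  (1 - ((RatFunc.X : RatFunc ℚ) ^ (m : ℤ)) ^ ((i : ℤ) + 1)))))
          * algebraMap (Polynomial ℚ) (RatFunc ℚ) b
        = algebraMap (Polynomial ℚ) (RatFunc ℚ) (Polynomial.cyclotomic d ℚ * a) :=
  qPoch_ratio_congr_qbinom_general d m r hd hdm h hdvd k hk
end

section
/- For all integers n ≥ 2, ∑_{k=0}^{n-1} (4k+1) binom(2k,k)^2 · 16^{n-1-k} ≡ 0 (mod n·binom(2n,n)). -/
/-!
Writing `S n` for the sum, `S (n + 1) = 16 * S n + (4n + 1) * centralBinom n ^ 2`, and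
`(n + 1) * centralBinom (n + 1) = 2 * (2n + 1) * centralBinom n` turns this recursion into the
closed form `4 * S n = (n * centralBinom n) ^ 2`. For `n ≥ 2` the factor `n * centralBinom n`
is `2 * (2n - 1) * centralBinom (n - 1)` with `centralBinom (n - 1)` even, so it is divisible
by `4`, and then it divides `(n * centralBinom n) ^ 2 / 4`.
-/

open Finset

theorem dvd_of_mul_eq_sq_of_dvd {α : Type*} [CommMonoidWithZero α] [IsLeftCancelMulZero α] {a N S : α}
    (ha : a ≠ 0) (haN : a ∣ N) (h : a * S = N ^ 2) : N ∣ S := by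
  obtain ⟨t, rfl⟩ := haN
  refine ⟨t, mul_left_cancel₀ ha ?_⟩
  rw [h, sq]
  ac_rfl

namespace Nat

theorem four_dvd_mul_centralBinom {n : ℕ} (hn : 2 ≤ n) : 4 ∣ n * centralBinom n := by
  obtain ⟨m, rfl⟩ : ∃ m, n = m + 1 := ⟨n - 1, by omega⟩
  rw [succ_mul_centralBinom_succ, mul_assoc, show 4 = 2 * 2 by rfl]
  exact mul_dvd_mul_left 2 (dvd_mul_of_dvd_right (two_dvd_centralBinom_of_one_le (by omega)) _)

theorem sum_range_succ_centralBinom_sq_mul_pow (n : ℕ) :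
    ∑ k ∈ range (n + 1), (4 * k + 1) * centralBinom k ^ 2 * 16 ^ (n - k) =
      16 * ∑ k ∈ range n, (4 * k + 1) * centralBinom k ^ 2 * 16 ^ (n - 1 - k) +
        (4 * n + 1) * centralBinom n ^ 2 := by
  rw [sum_range_succ, Nat.sub_self, pow_zero, mul_one, mul_sum]
  congr 1
  refine sum_congr rfl fun k hk => ?_
  rw [show n - k = n - 1 - k + 1 by have := mem_range.mp hk; omega, pow_succ]
  ring

theorem four_mul_sum_centralBinom_sq_mul_pow (n : ℕ) :
    4 * ∑ k ∈ range n, (4 * k + 1) * centralBinom k ^ 2 * 16 ^ (n - 1 - k) =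
      (n * centralBinom n) ^ 2 := by
  induction n with
  | zero => simp
  | succ n ih =>
    rw [Nat.add_sub_cancel, sum_range_succ_centralBinom_sq_mul_pow, succ_mul_centralBinom_succ,
      mul_add, ← mul_assoc 4 16, mul_comm 4 16, mul_assoc 16, ih]
    ring

end Nat

theorem binomial_sum_div_rho_two (n : ℕ) (hn : 2 ≤ n) :
    ((n : ℤ) * Nat.choose (2 * n) n) ∣
      ∑ k ∈ Finset.range n,
        (4 * (k : ℤ) + 1) * (Nat.choose (2 * k) k : ℤ) ^ 2 * 16 ^ (n - 1 - k) := by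
  simp only [← Nat.centralBinom_eq_two_mul_choose]
  exact_mod_cast dvd_of_mul_eq_sq_of_dvd four_ne_zero (Nat.four_dvd_mul_centralBinom hn)
    (Nat.four_mul_sum_centralBinom_sq_mul_pow n)
end
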